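/- Let L ≥ 1, let n₀ = n, n₁, …, n_{L−1} be positive layer dimensions and n_L = d the output dimension. Let φ : ℝ → ℝ be convex on all of ℝ and monotone (nondecreasing). For l = 1, …, L let W^l be an n_l × n_{l−1} real matrix all of whose entries are nonnegative, V^l an n_l × n real matrix all of whose entries are nonpositive, and ω^l ∈ ℝ^{n_l}, and additionally suppose W^1 = 0. Define z⁰(x) = x, z^l(x) = φ applied componentwise to (W^l · z^{l−1}(x) + V^l · x + ω^l) for l = 1, …, L−1, and f(x) = W^L · z^{L−1}(x) + V^L · x + ω^L. Then for every output index i ∈ Fin d, the map x ↦ (f x) i is convex on all of ℝ^n and antitone with respect to the componentwise partial order on ℝ^n: if x ≤ x' componentwise, then (f x) i ≥ (f x') i. -/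

import Mathlib

/-!
Functions that are convex and antitone (for the componentwise order) are stable under
nonnegative linear combinations, under adding `x ↦ (V *ᵥ x) i + c` with `V ≤ 0`, and under
post-composition with a convex nondecreasing `φ`. So by induction on the depth every
`x ↦ W l *ᵥ z l x` is componentwise convex and antitone, and `f` is the next pre-activation.
The induction is on `W l *ᵥ z l x` rather than on `z l x` because `z 0 x = x` is increasing;
it starts because `W 0 = 0`.
-/

open Matrix Set

section Convexity

variable {𝕜 E β γ ι : Type*} [Semiring 𝕜] [PartialOrder 𝕜] [AddCommMonoid E] [SMul 𝕜 E]
  {s : Set E}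

theorem ConvexOn.monotone_comp [AddCommMonoid β] [PartialOrder β] [SMul 𝕜 β]
    [AddCommMonoid γ] [PartialOrder γ] [SMul 𝕜 γ] {f : E → β} {g : β → γ}
    (hg : ConvexOn 𝕜 univ g) (hg_mono : Monotone g) (hf : ConvexOn 𝕜 s f) :
    ConvexOn 𝕜 s (g ∘ f) :=
  ⟨hf.1, fun _ hx _ hy _ _ ha hb hab =>
    (hg_mono (hf.2 hx hy ha hb hab)).trans (hg.2 trivial trivial ha hb hab)⟩

theorem convexOn_pi_iff {f : E → ι → 𝕜} (hs : Convex 𝕜 s) :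
    ConvexOn 𝕜 s f ↔ ∀ i, ConvexOn 𝕜 s (f · i) := by
  simp only [ConvexOn, hs, true_and, Pi.le_def, Pi.add_apply, Pi.smul_apply]
  exact ⟨fun h i _ hx _ hy _ _ ha hb hab => h hx hy ha hb hab i,
    fun h _ hx _ hy _ _ ha hb hab i => h i hx hy ha hb hab⟩

theorem ConvexOn.monotone_comp_apply {φ : 𝕜 → 𝕜} (hφ : ConvexOn 𝕜 univ φ)
    (hφ_mono : Monotone φ) {g : E → ι → 𝕜} (hg : ConvexOn 𝕜 s g) :
    ConvexOn 𝕜 s (fun x i => φ (g x i)) :=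
  (convexOn_pi_iff hg.1).2 fun i => hφ.monotone_comp hφ_mono ((convexOn_pi_iff hg.1).1 hg i)

end Convexity

namespace Matrix

variable {R ι κ : Type*} [Fintype ι]

theorem monotone_mulVec [Semiring R] [PartialOrder R] [IsOrderedRing R] {A : Matrix κ ι R}
    (hA : ∀ i j, 0 ≤ A i j) : Monotone (A *ᵥ ·) :=
  fun _ _ huv i => dotProduct_le_dotProduct_of_nonneg_left huv (hA i)

theorem antitone_mulVec [Ring R] [PartialOrder R] [IsOrderedRing R] {B : Matrix κ ι R}
    (hB : ∀ i j, B i j ≤ 0) : Antitone (B *ᵥ ·) := by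
  intro u v huv
  simpa [neg_mulVec] using monotone_mulVec (A := -B) (fun i j => neg_nonneg.2 (hB i j)) huv

variable {𝕜 : Type*} [CommSemiring 𝕜] [PartialOrder 𝕜]

theorem convexOn_mulVec (B : Matrix κ ι 𝕜) : ConvexOn 𝕜 univ (B *ᵥ ·) :=
  B.mulVecLin.convexOn convex_univ

theorem _root_.ConvexOn.mulVec [IsOrderedRing 𝕜] {E : Type*} [AddCommMonoid E] [SMul 𝕜 E]
    {s : Set E} {A : Matrix κ ι 𝕜} (hA : ∀ i j, 0 ≤ A i j) {g : E → ι → 𝕜}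
    (hg : ConvexOn 𝕜 s g) : ConvexOn 𝕜 s (fun x => A *ᵥ g x) :=
  ⟨hg.1, fun x hx y hy a b ha hb hab => by
    simpa only [mulVec_add, mulVec_smul] using monotone_mulVec hA (hg.2 hx hy ha hb hab)⟩

end Matrix

theorem icnn_output_convex_antitone_general
    (L : ℕ) (hL : 1 ≤ L)
    (dims : ℕ → ℕ)
    (φ : ℝ → ℝ) (hφ_convex : ConvexOn ℝ Set.univ φ) (hφ_mono : Monotone φ)
    (W : (l : ℕ) → Matrix (Fin (dims (l + 1))) (Fin (dims l)) ℝ)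
    (hW : ∀ l, l + 1 ≤ L → ∀ i j, 0 ≤ W l i j)
    (hW1 : W 0 = 0)
    (V : (l : ℕ) → Matrix (Fin (dims (l + 1))) (Fin (dims 0)) ℝ)
    (hV : ∀ l, l + 1 ≤ L → ∀ i j, V l i j ≤ 0)
    (ω : (l : ℕ) → Fin (dims (l + 1)) → ℝ)
    (z : (l : ℕ) → (Fin (dims 0) → ℝ) → (Fin (dims l) → ℝ))
    (hzrec : ∀ l, l + 1 ≤ L - 1 → ∀ x,
      z (l + 1) x = fun i => φ (((W l).mulVec (z l x) + (V l).mulVec x + ω l) i))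
    (f : (Fin (dims 0) → ℝ) → (Fin (dims (L - 1 + 1)) → ℝ))
    (hf : ∀ x, f x =
      (W (L - 1)).mulVec (z (L - 1) x) + (V (L - 1)).mulVec x + ω (L - 1)) :
    ∀ i : Fin (dims (L - 1 + 1)),
      ConvexOn ℝ Set.univ (fun x => f x i) ∧
      Antitone (fun x => f x i) := by
  set pre := fun l x => W l *ᵥ z l x + V l *ᵥ x + ω l
  have pre_of_weighted : ∀ l, l + 1 ≤ L →
      ConvexOn ℝ univ (fun x => W l *ᵥ z l x) ∧ Antitone (fun x => W l *ᵥ z l x) →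
      ConvexOn ℝ univ (pre l) ∧ Antitone (pre l) := fun l hl h =>
    ⟨(h.1.add (convexOn_mulVec (V l))).add_const (ω l),
      (h.2.add (antitone_mulVec (hV l hl))).add_const (ω l)⟩
  have weighted : ∀ l, l ≤ L - 1 →
      ConvexOn ℝ univ (fun x => W l *ᵥ z l x) ∧ Antitone (fun x => W l *ᵥ z l x) := by
    intro l
    induction l with
    | zero =>
      simp only [hW1, zero_mulVec]
      exact fun _ => ⟨convexOn_const 0 convex_univ, antitone_const⟩
    | succ m ih =>
      intro hm
      obtain ⟨hconv, hanti⟩ := pre_of_weighted m (by omega) (ih (by omega))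
      have hW_nonneg := hW (m + 1) (by omega)
      rw [show z (m + 1) = fun x i => φ (pre m x i) from funext (hzrec m hm)]
      exact ⟨(hφ_convex.monotone_comp_apply hφ_mono hconv).mulVec hW_nonneg,
        (monotone_mulVec hW_nonneg).comp_antitone
          (Antitone.of_apply₂ fun i => hφ_mono.comp_antitone (hanti.apply₂ i))⟩
  obtain ⟨hconv, hanti⟩ := pre_of_weighted (L - 1) (by omega) (weighted (L - 1) le_rfl)
  rw [show f = pre (L - 1) from funext hf]
  exact fun i => ⟨(convexOn_pi_iff convex_univ).1 hconv i, hanti.apply₂ i⟩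

/-- The output of an input-convex neural network
`z⁰ = x`, `z^l = φ(W^l z^{l−1} + V^l x + ω^l)` (`l = 1, …, L−1`),
`f(x) = W^L z^{L−1}(x) + V^L x + ω^L`,
with convex nondecreasing activation `φ`, elementwise nonnegative weight
matrices `W^l` with `W^1 = 0`, and elementwise nonpositive feedforward
matrices `V^l`, is componentwise convex and antitone
(for the componentwise partial order) in the input `x`.
Here `dims l` is the width `n_l` of layer `l` (`dims 0 = n`, and
`dims (L - 1 + 1) = dims L = d` since `1 ≤ L`),
and `W l`, `V l`, `ω l` are the data of layer `l + 1`
(so `W 0` is the paper's `W^1`). -/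
theorem icnn_output_convex_antitone
    (L : ℕ) (hL : 1 ≤ L)
    (dims : ℕ → ℕ) (hdims : ∀ l, l ≤ L - 1 → 0 < dims l)
    (φ : ℝ → ℝ) (hφ_convex : ConvexOn ℝ Set.univ φ) (hφ_mono : Monotone φ)
    (W : (l : ℕ) → Matrix (Fin (dims (l + 1))) (Fin (dims l)) ℝ)
    (hW : ∀ l, l + 1 ≤ L → ∀ i j, 0 ≤ W l i j)
    (hW1 : W 0 = 0)
    (V : (l : ℕ) → Matrix (Fin (dims (l + 1))) (Fin (dims 0)) ℝ)
    (hV : ∀ l, l + 1 ≤ L → ∀ i j, V l i j ≤ 0)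
    (ω : (l : ℕ) → Fin (dims (l + 1)) → ℝ)
    (z : (l : ℕ) → (Fin (dims 0) → ℝ) → (Fin (dims l) → ℝ))
    (hz0 : ∀ x, z 0 x = x)
    (hzrec : ∀ l, l + 1 ≤ L - 1 → ∀ x,
      z (l + 1) x = fun i => φ (((W l).mulVec (z l x) + (V l).mulVec x + ω l) i))
    (f : (Fin (dims 0) → ℝ) → (Fin (dims (L - 1 + 1)) → ℝ))
    (hf : ∀ x, f x =
      (W (L - 1)).mulVec (z (L - 1) x) + (V (L - 1)).mulVec x + ω (L - 1)) :
    ∀ i : Fin (dims (L - 1 + 1)),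
      ConvexOn ℝ Set.univ (fun x => f x i) ∧
      Antitone (fun x => f x i) :=
  icnn_output_convex_antitone_general L hL dims φ hφ_convex hφ_mono W hW hW1 V hV ω z hzrec f hf
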